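/- arXiv:0810.5487 — 4 statements merged into one kernel-verified Lean document; each statement's English description precedes it below -/
import Mathlib

section
/- Let d ≥ 0 and i ≥ 1 be integers, and write d + 1 = qi + r where q ≥ 0 and 1 ≤ r ≤ i are integers. Let B_1, …, B_q be pairwise disjoint finite sets each of cardinality i + 1, let W be a finite set of cardinality r + 1 disjoint from all B_t, and let W' ⊆ W have cardinality r. Then for every integer j, N_j(B_1,…,B_q,W) = N_j(B_1,…,B_q,W') + N_{j−1}(B_1,…,B_q,W') + N_{j−r}(B_1,…,B_q). -/
/-!
Let `w` be the vertex of `W` outside `W'`, and `K` the join of the `∂B_t`. A face `F` of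
`K ∗ ∂W` either contains `w`, and then `F \ {w}` is a face of `K ∗ ∂W'`; or it avoids `w` and
does not contain `W'`, and then it is itself a face of `K ∗ ∂W'`; or it avoids `w` and contains
`W'`, and then `F \ W'` is a face of `K`. These three bijections lower the cardinality by `1`,
`0` and `r`.
-/

/-- The join of the boundaries of the simplices on the (pairwise disjoint nonempty) sets in
`Bs`: its faces are the subsets `F` of the union of the sets in `Bs` such that no `B ∈ Bs`
is contained in `F`. -/
def joinBoundaryFaces {α : Type*} [DecidableEq α] (Bs : List (Finset α)) :
    Finset (Finset α) :=
  (Bs.foldr (· ∪ ·) ∅).powerset.filter (fun F => ∀ B ∈ Bs, ¬ B ⊆ F)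

/-- `N_j(Bs)`: the number of faces of cardinality `j + 1` (dimension `j`) of the join of the
boundaries of the simplices on the sets in `Bs`; in particular `N_{-1} = 1` and `N_j = 0` for
`j < -1`. -/
def Ncount {α : Type*} [DecidableEq α] (Bs : List (Finset α)) (j : ℤ) : ℕ :=
  ((joinBoundaryFaces Bs).filter (fun F => (F.card : ℤ) = j + 1)).card

open Finset

section JoinBoundary

variable {α : Type*}

def faceCount (𝓕 : Finset (Finset α)) (j : ℤ) : ℕ :=
  #(𝓕.filter fun F => (F.card : ℤ) = j + 1)

lemma faceCount_eq_filter_add_filter_not (𝓕 : Finset (Finset α)) (p : Finset α → Prop)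
    [DecidablePred p] (j : ℤ) :
    faceCount 𝓕 j = faceCount (𝓕.filter p) j + faceCount (𝓕.filter fun F => ¬ p F) j := by
  rw [faceCount, faceCount, faceCount, filter_comm (p := p), filter_comm (p := fun F => ¬ p F),
    card_filter_add_card_filter_not]

variable [DecidableEq α]

lemma faceCount_image {𝓕 : Finset (Finset α)} {f : Finset α → Finset α} (hf : Set.InjOn f 𝓕)
    {k : ℕ} (hk : ∀ G ∈ 𝓕, #(f G) = #G + k) (j : ℤ) :
    faceCount (𝓕.image f) j = faceCount 𝓕 (j - k) := by
  rw [faceCount, faceCount, filter_image, card_image_of_injOn (hf.mono (filter_subset _ _))]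
  refine congrArg card (filter_congr fun G hG => ?_)
  rw [hk G hG]
  push_cast
  constructor <;> intro h <;> linarith

lemma mem_joinBoundaryFaces {Bs : List (Finset α)} {F : Finset α} :
    F ∈ joinBoundaryFaces Bs ↔ F ⊆ Bs.toFinset.sup id ∧ ∀ B ∈ Bs, ¬ B ⊆ F := by
  rw [joinBoundaryFaces, ← List.foldr_sup_eq_sup_toFinset, mem_filter, mem_powerset]
  rfl

lemma mem_joinBoundaryFaces_append_singleton {Bs : List (Finset α)} {V F : Finset α} :
    F ∈ joinBoundaryFaces (Bs ++ [V]) ↔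
      F ⊆ V ∪ Bs.toFinset.sup id ∧ (∀ B ∈ Bs, ¬ B ⊆ F) ∧ ¬ V ⊆ F := by
  simp [mem_joinBoundaryFaces, List.toFinset_append, or_imp, forall_and]

variable {Bs : List (Finset α)} {V : Finset α} {w : α}

lemma notMem_of_mem_joinBoundaryFaces_append_singleton (hwV : w ∉ V)
    (hwU : w ∉ Bs.toFinset.sup id) {G : Finset α} (hG : G ∈ joinBoundaryFaces (Bs ++ [V])) :
    w ∉ G := fun hwG =>
  notMem_union.2 ⟨hwV, hwU⟩ ((mem_joinBoundaryFaces_append_singleton.1 hG).1 hwG)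

lemma insert_mem_joinBoundaryFaces_append_insert_iff (hwV : w ∉ V)
    (hwU : w ∉ Bs.toFinset.sup id) {G : Finset α} (hwG : w ∉ G) :
    insert w G ∈ joinBoundaryFaces (Bs ++ [insert w V]) ↔ G ∈ joinBoundaryFaces (Bs ++ [V]) := by
  have hwB : ∀ B ∈ Bs, w ∉ B := fun B hB hw =>
    hwU (le_sup (f := id) (List.mem_toFinset.2 hB) hw)
  simp only [mem_joinBoundaryFaces_append_singleton, insert_union, insert_subset_insert_iff hwG,
    insert_subset_insert_iff hwV]
  refine and_congr_right fun _ => and_congr_left fun _ => forall₂_congr fun B hB => ?_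
  rw [subset_insert_iff_of_notMem (hwB B hB)]

lemma filter_mem_joinBoundaryFaces_append_insert (hwV : w ∉ V)
    (hwU : w ∉ Bs.toFinset.sup id) :
    (joinBoundaryFaces (Bs ++ [insert w V])).filter (w ∈ ·) =
      (joinBoundaryFaces (Bs ++ [V])).image (insert w) := by
  ext F
  rw [mem_filter, mem_image]
  constructor
  · rintro ⟨hF, hwF⟩
    refine ⟨F.erase w, ?_, insert_erase hwF⟩
    rwa [← insert_mem_joinBoundaryFaces_append_insert_iff hwV hwU (notMem_erase w F),
      insert_erase hwF]
  · rintro ⟨G, hG, rfl⟩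
    have hwG := notMem_of_mem_joinBoundaryFaces_append_singleton hwV hwU hG
    exact ⟨(insert_mem_joinBoundaryFaces_append_insert_iff hwV hwU hwG).2 hG, mem_insert_self w G⟩

lemma filter_notMem_not_subset_joinBoundaryFaces_append_insert (hwV : w ∉ V)
    (hwU : w ∉ Bs.toFinset.sup id) :
    ((joinBoundaryFaces (Bs ++ [insert w V])).filter (w ∉ ·)).filter (¬ V ⊆ ·) =
      joinBoundaryFaces (Bs ++ [V]) := by
  ext F
  simp only [mem_filter, mem_joinBoundaryFaces_append_singleton, insert_union]
  constructor
  · rintro ⟨⟨⟨hFU, hB, -⟩, hwF⟩, hVF⟩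
    exact ⟨(subset_insert_iff_of_notMem hwF).1 hFU, hB, hVF⟩
  · rintro ⟨hFU, hB, hVF⟩
    have hwF := notMem_of_mem_joinBoundaryFaces_append_singleton hwV hwU
      (mem_joinBoundaryFaces_append_singleton.2 ⟨hFU, hB, hVF⟩)
    exact ⟨⟨⟨hFU.trans (subset_insert w _), hB, fun h => hVF ((subset_insert w V).trans h)⟩, hwF⟩,
      hVF⟩

lemma filter_notMem_subset_joinBoundaryFaces_append_insert (hwV : w ∉ V)
    (hwU : w ∉ Bs.toFinset.sup id) (hVU : Disjoint V (Bs.toFinset.sup id)) :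
    ((joinBoundaryFaces (Bs ++ [insert w V])).filter (w ∉ ·)).filter (V ⊆ ·) =
      (joinBoundaryFaces Bs).image (· ∪ V) := by
  ext F
  simp only [mem_filter, mem_image, mem_joinBoundaryFaces_append_singleton, insert_union]
  simp only [mem_joinBoundaryFaces]
  constructor
  · rintro ⟨⟨⟨hFU, hB, -⟩, hwF⟩, hVF⟩
    refine ⟨F \ V, ⟨sdiff_le_iff.2 ((subset_insert_iff_of_notMem hwF).1 hFU),
      fun B hB' hBF => hB B hB' (hBF.trans sdiff_subset)⟩, sdiff_union_of_subset hVF⟩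
  · rintro ⟨G, ⟨hGU, hB⟩, rfl⟩
    have hBV : ∀ B ∈ Bs, Disjoint B V := fun B hB' =>
      (hVU.mono_right (le_sup (f := id) (List.mem_toFinset.2 hB'))).symm
    have hwGV : w ∉ G ∪ V := notMem_union.2 ⟨fun hwG => hwU (hGU hwG), hwV⟩
    have hGVU : G ∪ V ⊆ V ∪ Bs.toFinset.sup id :=
      union_subset (hGU.trans subset_union_right) subset_union_left
    exact ⟨⟨⟨hGVU.trans (subset_insert w _),
      fun B hB' hBGV => hB B hB' ((hBV B hB').left_le_of_le_sup_right hBGV),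
      fun h => hwGV (h (mem_insert_self w V))⟩, hwGV⟩, subset_union_right⟩

theorem Ncount_append_insert (hwV : w ∉ V) (hdisj : Disjoint (insert w V) (Bs.toFinset.sup id))
    (j : ℤ) :
    Ncount (Bs ++ [insert w V]) j =
      Ncount (Bs ++ [V]) j + Ncount (Bs ++ [V]) (j - 1) + Ncount Bs (j - #V) := by
  obtain ⟨hwU, hVU⟩ := disjoint_insert_left.1 hdisj
  have hwT : ∀ {G}, G ∈ joinBoundaryFaces (Bs ++ [V]) → w ∉ G :=
    notMem_of_mem_joinBoundaryFaces_append_singleton hwV hwU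
  have hinsert : Set.InjOn (insert w) (joinBoundaryFaces (Bs ++ [V]) : Set (Finset α)) :=
    fun G₁ hG₁ G₂ hG₂ h => by
      simpa [erase_insert (hwT hG₁), erase_insert (hwT hG₂)] using congrArg (·.erase w) h
  have hKV : ∀ G ∈ joinBoundaryFaces Bs, Disjoint G V := fun G hG =>
    (hVU.mono_right (mem_joinBoundaryFaces.1 hG).1).symm
  have hunion : Set.InjOn (· ∪ V) (joinBoundaryFaces Bs : Set (Finset α)) :=
    fun G₁ hG₁ G₂ hG₂ h => by
      simpa [union_sdiff_cancel_right (hKV G₁ hG₁), union_sdiff_cancel_right (hKV G₂ hG₂)]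
        using congrArg (· \ V) h
  change faceCount _ j = faceCount _ j + faceCount _ (j - 1) + faceCount _ (j - #V)
  rw [faceCount_eq_filter_add_filter_not _ (w ∈ ·),
    faceCount_eq_filter_add_filter_not ((joinBoundaryFaces _).filter (w ∉ ·)) (V ⊆ ·),
    filter_mem_joinBoundaryFaces_append_insert hwV hwU,
    filter_notMem_subset_joinBoundaryFaces_append_insert hwV hwU hVU,
    filter_notMem_not_subset_joinBoundaryFaces_append_insert hwV hwU,
    faceCount_image hinsert (k := 1) fun G hG => card_insert_of_notMem (hwT hG),
    faceCount_image hunion fun G hG => card_union_of_disjoint (hKV G hG)]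
  push_cast
  ring

end JoinBoundary

theorem joinBoundary_face_recurrence_general {α : Type*} [DecidableEq α]
    (q r : ℕ)
    (B : Fin q → Finset α)
    (W : Finset α) (hWcard : W.card = r + 1) (hWB : ∀ t, Disjoint W (B t))
    (W' : Finset α) (hW' : W' ⊆ W) (hW'card : W'.card = r) (j : ℤ) :
    Ncount (List.ofFn B ++ [W]) j =
      Ncount (List.ofFn B ++ [W']) j + Ncount (List.ofFn B ++ [W']) (j - 1) +
        Ncount (List.ofFn B) (j - r) := by
  obtain ⟨w, hwW', rfl⟩ := exists_eq_insert_iff.2 ⟨hW', by rw [hW'card, hWcard]⟩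
  have hdisj : Disjoint (insert w W') ((List.ofFn B).toFinset.sup id) := by
    refine Finset.disjoint_sup_right.2 fun C hC => ?_
    obtain ⟨t, rfl⟩ := List.mem_ofFn.1 (List.mem_toFinset.1 hC)
    exact hWB t
  rw [Ncount_append_insert hwW' hdisj, hW'card]

/-- the recurrence
`f_j(S(i,d)) = f_j(S(i,d-1)) + f_{j-1}(S(i,d-1)) + f_{j-r}(S(i,d-r))` for
`S(i,d) = ∂σ^i ∗ ⋯ ∗ ∂σ^i ∗ ∂σ^r` (`q` copies of `∂σ^i`), where `d + 1 = q·i + r`,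
`1 ≤ r ≤ i`: here the `q` copies of `∂σ^i` are realized on pairwise disjoint vertex sets
`B t` of cardinality `i + 1`, the factor `∂σ^r` on a set `W` of cardinality `r + 1` disjoint
from all `B t`, and `W' ⊆ W` has cardinality `r`. -/
theorem joinBoundary_face_recurrence {α : Type*} [DecidableEq α]
    (d i : ℕ) (hi : 1 ≤ i) (q r : ℕ) (hr1 : 1 ≤ r) (hri : r ≤ i)
    (hd : d + 1 = q * i + r)
    (B : Fin q → Finset α) (hBcard : ∀ t, (B t).card = i + 1)
    (hBdisj : ∀ s t, s ≠ t → Disjoint (B s) (B t))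
    (W : Finset α) (hWcard : W.card = r + 1) (hWB : ∀ t, Disjoint W (B t))
    (W' : Finset α) (hW' : W' ⊆ W) (hW'card : W'.card = r) (j : ℤ) :
    Ncount (List.ofFn B ++ [W]) j =
      Ncount (List.ofFn B ++ [W']) j + Ncount (List.ofFn B ++ [W']) (j - 1) +
        Ncount (List.ofFn B) (j - r) :=
  joinBoundary_face_recurrence_general q r B W hWcard hWB W' hW' hW'card j
end

section
/- Let d ≥ 0 and i ≥ 1 be integers. Then there exist natural numbers c_0, c_1, …, c_{⌊(d+1)/2⌋} such that P_{d,i}(t) = ∑_{j=0}^{⌊(d+1)/2⌋} c_j · t^j · P_{d−2j, i+1}(t) in ℤ[t]. -/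
open Polynomial Finset

/-- The polynomial `P_{d,i}(t) ∈ ℤ[t]`: `P_{d,i} = 1` for `d < 0` (in particular `P_{-1,i} = 1`),
and for `d ≥ 0`, `P_{d,i} = (1 + t + ⋯ + t^i)^q (1 + t + ⋯ + t^r)` where `q ≥ 0` and
`1 ≤ r ≤ i` are the unique integers with `d + 1 = q·i + r` (for `i ≥ 1`, `q = ⌊d/i⌋` and
`r = (d mod i) + 1`). -/
noncomputable def Ppoly (d : ℤ) (i : ℕ) : ℤ[X] :=
  if d < 0 then 1
  else (∑ k ∈ range (i + 1), X ^ k) ^ (d.toNat / i) *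
    (∑ k ∈ range (d.toNat % i + 2), X ^ k)

/-!
Write `S m = 1 + t + ⋯ + t^m`, so that `P_{qi+r-1,i} = S_i^q S_r` for `0 ≤ r ≤ i`. Multiplying by
`(t - 1)²` shows `S_i S_{r+1} = S_{i+1} S_r + t^{r+1} S_{i-r-1}`, which gives the recursion
`P_{d,i} = S_{i+1} P_{d-i-1,i} + t^{r+1} P_{d-2r-2,i}` for `d = (q+1)i + r`, `0 ≤ r < i`.
The ℕ-span of `B_{e,i+1}` is stable under `S_{i+1} · _ : e ↦ e + i + 1` (since
`S_{i+1} P_{e,i+1} = P_{e+i+1,i+1}`) and under `t^k · _ : e ↦ e + 2k`, and for `d < i` already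
`P_{d,i} = S_{d+1} = P_{d,i+1}`, so strong induction on `d` places `P_{d,i}` in that span.
-/

noncomputable def geomPoly (m : ℕ) : ℤ[X] := ∑ k ∈ range (m + 1), X ^ k

lemma geomPoly_zero : geomPoly 0 = 1 := by simp [geomPoly]

lemma geomPoly_mul_X_sub_one (m : ℕ) : geomPoly m * (X - 1) = X ^ (m + 1) - 1 :=
  geom_sum_mul X (m + 1)

lemma geomPoly_mul_geomPoly (r s : ℕ) :
    geomPoly (r + s + 1) * geomPoly (r + 1) =
      geomPoly (r + s + 2) * geomPoly r + X ^ (r + 1) * geomPoly s := by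
  have h := geomPoly_mul_X_sub_one
  refine mul_right_cancel₀ (pow_ne_zero 2 (show (X - 1 : ℤ[X]) ≠ 0 from X_sub_C_ne_zero 1)) ?_
  linear_combination (geomPoly (r + 1) * (X - 1)) * h (r + s + 1)
    + ((X : ℤ[X]) ^ (r + s + 2) - 1) * h (r + 1) - (geomPoly r * (X - 1)) * h (r + s + 2)
    - ((X : ℤ[X]) ^ (r + s + 3) - 1) * h r - ((X : ℤ[X]) ^ (r + 1) * (X - 1)) * h s

section Ppoly

variable {i : ℕ}

lemma Ppoly_natCast_mul_add (q r : ℕ) (hr : r < i) :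
    Ppoly ((q * i + r : ℕ) : ℤ) i = geomPoly i ^ q * geomPoly (r + 1) := by
  rw [Ppoly, if_neg (by omega), Int.toNat_natCast, Nat.add_comm (q * i),
    Nat.add_mul_div_right _ _ (by omega), Nat.div_eq_of_lt hr, zero_add,
    Nat.add_mul_mod_self_right, Nat.mod_eq_of_lt hr]
  rfl

lemma Ppoly_natCast_sub_one (hi : 0 < i) (q r : ℕ) (hr : r ≤ i) :
    Ppoly ((q * i + r : ℕ) - 1 : ℤ) i = geomPoly i ^ q * geomPoly r := by
  rcases r with _ | r
  · rcases q with _ | q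
    · simp [Ppoly, geomPoly_zero]
    · obtain ⟨k, rfl⟩ : ∃ k, i = k + 1 := ⟨i - 1, by omega⟩
      rw [show (((q + 1) * (k + 1) + 0 : ℕ) : ℤ) - 1 = ((q * (k + 1) + k : ℕ) : ℤ) by
          push_cast; ring,
        Ppoly_natCast_mul_add q k (by omega), geomPoly_zero, pow_succ, mul_one]
  · rw [show ((q * i + (r + 1) : ℕ) : ℤ) - 1 = ((q * i + r : ℕ) : ℤ) by push_cast; ring,
      Ppoly_natCast_mul_add q r hr]

lemma Ppoly_natCast_sub_one_of_le (hi : 0 < i) {n : ℕ} (hn : n ≤ i) :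
    Ppoly ((n : ℤ) - 1) i = geomPoly n := by
  simpa using Ppoly_natCast_sub_one hi 0 n hn

lemma geomPoly_mul_Ppoly (hi : 0 < i) {d : ℤ} (hd : -1 ≤ d) :
    geomPoly i * Ppoly d i = Ppoly (d + i) i := by
  obtain ⟨n, hn⟩ := Int.eq_ofNat_of_zero_le (show 0 ≤ d + 1 by omega)
  obtain rfl : d = ((i * (n / i) + n % i : ℕ) : ℤ) - 1 := by rw [Nat.div_add_mod]; omega
  rw [show ((i * (n / i) + n % i : ℕ) : ℤ) - 1 + i = (((n / i + 1) * i + n % i : ℕ) : ℤ) - 1 by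
      push_cast; ring,
    mul_comm i, Ppoly_natCast_sub_one hi _ _ (Nat.mod_lt n hi).le,
    Ppoly_natCast_sub_one hi _ _ (Nat.mod_lt n hi).le, pow_succ]
  ring

lemma Ppoly_recursion (q r s : ℕ) (hi : i = r + s + 1) :
    Ppoly ((((q + 1) * i + (r + 1) : ℕ) : ℤ) - 1) i =
      geomPoly (i + 1) * Ppoly (((q * i + r : ℕ) : ℤ) - 1) i +
        X ^ (r + 1) * Ppoly (((q * i + s : ℕ) : ℤ) - 1) i := by
  have hi0 : 0 < i := by omega
  rw [Ppoly_natCast_sub_one hi0 _ _ (by omega), Ppoly_natCast_sub_one hi0 _ _ (by omega),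
    Ppoly_natCast_sub_one hi0 _ _ (by omega), pow_succ, mul_assoc]
  subst hi
  rw [geomPoly_mul_geomPoly]
  ring

end Ppoly

/-- The ℕ-span of the basis `B_{d,i}`. -/
noncomputable def PpolyCone (i : ℕ) (d : ℤ) : Submodule ℕ ℤ[X] :=
  Submodule.span ℕ ((fun j : ℕ => X ^ j * Ppoly (d - 2 * j) i) '' {j | 2 * (j : ℤ) ≤ d + 1})

lemma mul_mem_span_of_forall_mem {R A : Type*} [CommSemiring R] [Semiring A] [Algebra R A]
    {s : Set A} {p : Submodule R A} {a x : A} (h : ∀ y ∈ s, a * y ∈ p)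
    (hx : x ∈ Submodule.span R s) : a * x ∈ p :=
  (Submodule.span_le (p := p.comap (LinearMap.mulLeft R a))).mpr h hx

namespace PpolyCone

variable {i : ℕ} {d : ℤ} {p : ℤ[X]}

lemma Ppoly_mem (hd : -1 ≤ d) : Ppoly d i ∈ PpolyCone i d :=
  Submodule.subset_span ⟨0, by simp; omega, by simp⟩

lemma X_pow_mul_mem (k : ℕ) (hp : p ∈ PpolyCone i d) : X ^ k * p ∈ PpolyCone i (d + 2 * k) := by
  refine mul_mem_span_of_forall_mem ?_ hp
  rintro _ ⟨j, hj, rfl⟩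
  refine Submodule.subset_span ⟨k + j, ?_, ?_⟩
  · simp only [Set.mem_ofPred_eq] at hj ⊢
    push_cast
    omega
  · simp only [pow_add, mul_assoc]
    congr 3
    push_cast
    ring

lemma geomPoly_mul_mem (hi : 0 < i) (hp : p ∈ PpolyCone i d) :
    geomPoly i * p ∈ PpolyCone i (d + i) := by
  refine mul_mem_span_of_forall_mem ?_ hp
  rintro _ ⟨j, hj, rfl⟩
  simp only [Set.mem_ofPred_eq] at hj
  refine Submodule.subset_span ⟨j, by simp only [Set.mem_ofPred_eq]; omega, ?_⟩
  rw [mul_left_comm, geomPoly_mul_Ppoly hi (by omega), sub_add_eq_add_sub]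

lemma exists_eq_sum (d : ℕ) (hp : p ∈ PpolyCone i d) :
    ∃ c : ℕ → ℕ,
      p = ∑ j ∈ range ((d + 1) / 2 + 1), (c j : ℤ[X]) * X ^ j * Ppoly (d - 2 * j) i := by
  rw [PpolyCone, Finsupp.mem_span_image_iff_linearCombination] at hp
  obtain ⟨l, hl, rfl⟩ := hp
  refine ⟨l, ?_⟩
  have hsupp : l.support ⊆ range ((d + 1) / 2 + 1) := fun j hj => by
    have := (Finsupp.mem_supported _ l).mp hl hj
    simp only [Set.mem_ofPred_eq] at this
    simp only [mem_range]
    omega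
  rw [Finsupp.linearCombination_apply, Finsupp.sum_of_support_subset l hsupp _ (by simp)]
  simp only [nsmul_eq_mul, mul_assoc]

end PpolyCone

lemma Ppoly_mem_PpolyCone_succ {i : ℕ} (hi : 0 < i) (n : ℕ) :
    Ppoly ((n : ℤ) - 1) i ∈ PpolyCone (i + 1) ((n : ℤ) - 1) := by
  induction n using Nat.strong_induction_on with
  | _ n ih =>
  rcases le_or_gt n i with hn | hn
  · rw [Ppoly_natCast_sub_one_of_le hi hn,
      ← Ppoly_natCast_sub_one_of_le (Nat.succ_pos i) (by omega)]
    exact PpolyCone.Ppoly_mem (by omega)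
  obtain ⟨q, r, s, rfl, hrs⟩ : ∃ q r s, n = (q + 1) * i + (r + 1) ∧ i = r + s + 1 := by
    obtain ⟨m, rfl⟩ : ∃ m, n = i + 1 + m := ⟨n - i - 1, by omega⟩
    have hdiv := Nat.div_add_mod m i
    have hmod := Nat.mod_lt m hi
    exact ⟨m / i, m % i, i - m % i - 1, by linarith, by omega⟩
  have hsucc_mul : (q + 1) * i = q * i + i := by ring
  rw [Ppoly_recursion q r s hrs]
  refine add_mem ?_ ?_
  · have h := PpolyCone.geomPoly_mul_mem (Nat.succ_pos i) (ih (q * i + r) (by omega))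
    convert h using 2
    push_cast; ring
  · have h := PpolyCone.X_pow_mul_mem (r + 1) (ih (q * i + s) (by omega))
    convert h using 2
    rw [hrs]; push_cast; ring

/-- for `d ≥ 0` and `i ≥ 1` there are natural numbers `c_j` with
`P_{d,i}(t) = ∑_{j=0}^{⌊(d+1)/2⌋} c_j · t^j · P_{d-2j, i+1}(t)` in `ℤ[t]`. -/
theorem Ppoly_nonneg_comb_next (d i : ℕ) (hi : 1 ≤ i) :
    ∃ c : ℕ → ℕ, Ppoly d i =
      ∑ j ∈ range ((d + 1) / 2 + 1),
        (c j : ℤ[X]) * X ^ j * Ppoly ((d : ℤ) - 2 * j) (i + 1) := by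
  have h := Ppoly_mem_PpolyCone_succ hi (d + 1)
  rw [Nat.cast_succ, add_sub_cancel_right] at h
  exact PpolyCone.exists_eq_sum d h
end

section
/- Let d and k be integers with 2 ≤ k ≤ d − 1. Then, in ℤ, (k+1)·a(k,d) = 2(2d−1)·a(k−1,d−1) − b(k−1,d−1), where a(k,d) = 2^{k−1}(C(d−1,k) + C(d,k)) and b(k,d) = 2^k((d+1)(C(d−1,k) + C(d,k)) − 2·C(d+1,k+1)). -/
/-- `a(k,d) = 2^{k-1}·(C(d-1,k) + C(d,k))`, the coefficient of `n` in
`f_k(S(1,d,n)) = a(k,d)·n - b(k,d)`. -/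
def aCoef (k d : ℕ) : ℤ :=
  2 ^ (k - 1) * (((d - 1).choose k : ℤ) + (d.choose k : ℤ))

/-- `b(k,d) = 2^k·((d+1)·(C(d-1,k) + C(d,k)) - 2·C(d+1,k+1))`, the constant term in
`f_k(S(1,d,n)) = a(k,d)·n - b(k,d)`. -/
def bCoef (k d : ℕ) : ℤ :=
  2 ^ k * (((d : ℤ) + 1) * (((d - 1).choose k : ℤ) + (d.choose k : ℤ)) -
    2 * ((d + 1).choose (k + 1) : ℤ))

/-!
Writing `d = n + 1` and `k = j + 2`, both sides carry the factor `2 ^ (j + 1)`, and what remains is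
an identity between binomial coefficients of `n` and `n + 1`. It follows from Pascal's rule and the
absorption identity `(n + 1) * C(n, k) = (k + 1) * C(n + 1, k + 1)`, used at `n` and at `n - 1`.
-/

theorem Nat.mul_choose_sub_one_eq (n k : ℕ) : n * (n - 1).choose k = n.choose (k + 1) * (k + 1) := by
  cases n with
  | zero => simp
  | succ n => exact Nat.add_one_mul_choose_eq n k

theorem add_two_mul_choose_add_choose (n k : ℕ) :
    ((k : ℤ) + 2) * (n.choose (k + 1) + (n + 1).choose (k + 1)) =
      n * ((n - 1).choose k + n.choose k) + 2 * (n + 1).choose (k + 1) := by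
  have hpred : (n : ℤ) * (n - 1).choose k = n.choose (k + 1) * (k + 1) := by
    exact_mod_cast Nat.mul_choose_sub_one_eq n k
  have hsucc : ((n : ℤ) + 1) * n.choose k = (n + 1).choose (k + 1) * (k + 1) := by
    exact_mod_cast Nat.add_one_mul_choose_eq n k
  have hpascal : ((n + 1).choose (k + 1) : ℤ) = n.choose k + n.choose (k + 1) := by
    exact_mod_cast Nat.choose_succ_succ' n k
  linear_combination -hpred - hsucc - hpascal

theorem aCoef_recurrence_general (k d : ℕ) (hk : 2 ≤ k) :
    ((k : ℤ) + 1) * aCoef k d =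
      2 * (2 * (d : ℤ) - 1) * aCoef (k - 1) (d - 1) - bCoef (k - 1) (d - 1) := by
  obtain ⟨j, rfl⟩ : ∃ j, k = j + 2 := ⟨k - 2, by omega⟩
  cases d with
  | zero =>
    -- `0 - 1 = 0` in `ℕ`, and every term is a binomial coefficient that vanishes
    simp [aCoef, bCoef, Nat.choose_eq_zero_of_lt]
  | succ n =>
    have key := add_two_mul_choose_add_choose n (j + 1)
    simp only [aCoef, bCoef, Nat.add_one_sub_one]
    push_cast at key ⊢
    linear_combination 2 ^ (j + 1) * key

/-- for integers `2 ≤ k ≤ d - 1`, in `ℤ`,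
`(k+1)·a(k,d) = 2(2d-1)·a(k-1,d-1) - b(k-1,d-1)`. -/
theorem aCoef_recurrence (k d : ℕ) (hk : 2 ≤ k) (hkd : k + 1 ≤ d) :
    ((k : ℤ) + 1) * aCoef k d =
      2 * (2 * (d : ℤ) - 1) * aCoef (k - 1) (d - 1) - bCoef (k - 1) (d - 1) :=
  aCoef_recurrence_general k d hk
end

section
/- Let d and k be integers with 2 ≤ k ≤ d − 1. Then, in ℤ, (k+1)·b(k,d) = 4(d+1)(d−1)·a(k−1,d−1), where a(k,d) = 2^{k−1}(C(d−1,k) + C(d,k)) and b(k,d) = 2^k((d+1)(C(d−1,k) + C(d,k)) − 2·C(d+1,k+1)). -/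
/-! Both sides carry the factor `2^k (d+1)`: on the left through the absorption identity
`(d+1) C(d,k) = (k+1) C(d+1,k+1)`, on the right through `(d-1) C(d-2,k-1) = k C(d-1,k)`.
With `m = d - 1` and Pascal's rule `C(d,k) = C(m,k-1) + C(m,k)`, what remains is the ratio identity
`k C(m,k) + (k-1) C(m,k-1) = m C(m,k-1)`. -/

theorem Nat.add_one_mul_choose_add_one_add_mul_choose (n k : ℕ) :
    (k + 1) * n.choose (k + 1) + k * n.choose k = n * n.choose k := by
  have h := Nat.add_one_mul_choose_eq n k
  rw [Nat.choose_succ_succ] at h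
  linarith

theorem Nat.mul_sub_one_choose (n k : ℕ) : n * (n - 1).choose k = (k + 1) * n.choose (k + 1) := by
  cases n with
  | zero => simp
  | succ n => rw [Nat.add_sub_cancel, Nat.add_one_mul_choose_eq, mul_comm]

theorem add_one_mul_bCoef (k d : ℕ) :
    ((k : ℤ) + 1) * bCoef k d = 2 ^ k * ((d : ℤ) + 1) *
      (((k : ℤ) + 1) * ((d - 1).choose k : ℤ) + ((k : ℤ) - 1) * d.choose k) := by
  have h : ((d : ℤ) + 1) * d.choose k = (d + 1).choose (k + 1) * ((k : ℤ) + 1) := by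
    exact_mod_cast Nat.add_one_mul_choose_eq d k
  rw [bCoef]
  linear_combination (2 * 2 ^ k : ℤ) * h

theorem two_mul_mul_aCoef_add_one (k n : ℕ) :
    2 * (n : ℤ) * aCoef (k + 1) n =
      2 ^ (k + 1) * (((k : ℤ) + 2) * n.choose (k + 2) + n * n.choose (k + 1)) := by
  have h : (n : ℤ) * (n - 1).choose (k + 1) = ((k : ℤ) + 2) * n.choose (k + 2) := by
    exact_mod_cast Nat.mul_sub_one_choose n (k + 1)
  rw [aCoef, Nat.add_sub_cancel]
  linear_combination (2 ^ (k + 1) : ℤ) * h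

theorem bCoef_recurrence_general (k d : ℕ) (hk : 2 ≤ k) :
    ((k : ℤ) + 1) * bCoef k d =
      4 * ((d : ℤ) + 1) * ((d : ℤ) - 1) * aCoef (k - 1) (d - 1) := by
  obtain ⟨i, rfl⟩ : ∃ i, k = i + 2 := ⟨k - 2, by omega⟩
  cases d with
  | zero => simp [bCoef, aCoef, Nat.choose_eq_zero_iff] -- `d - 1 = 0` in ℕ; both sides vanish
  | succ m =>
    have hpascal : ((m + 1).choose (i + 2) : ℤ) = m.choose (i + 1) + m.choose (i + 2) := by
      exact_mod_cast Nat.choose_succ_succ m (i + 1)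
    have hratio : ((i : ℤ) + 2) * m.choose (i + 2) + ((i : ℤ) + 1) * m.choose (i + 1) =
        m * m.choose (i + 1) := by
      exact_mod_cast Nat.add_one_mul_choose_add_one_add_mul_choose m (i + 1)
    rw [add_one_mul_bCoef, show i + 2 - 1 = i + 1 from rfl, Nat.add_sub_cancel]
    push_cast
    linear_combination (2 ^ (i + 2) * ((m : ℤ) + 2)) * ((i + 1) * hpascal + hratio) -
      2 * ((m : ℤ) + 2) * two_mul_mul_aCoef_add_one i m

/-- for integers `2 ≤ k ≤ d - 1`, in `ℤ`,
`(k+1)·b(k,d) = 4(d+1)(d-1)·a(k-1,d-1)`. -/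
theorem bCoef_recurrence (k d : ℕ) (hk : 2 ≤ k) (hkd : k + 1 ≤ d) :
    ((k : ℤ) + 1) * bCoef k d =
      4 * ((d : ℤ) + 1) * ((d : ℤ) - 1) * aCoef (k - 1) (d - 1) :=
  bCoef_recurrence_general k d hk
end
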